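/- arXiv:1509.02209 — 2 statements merged into one kernel-verified Lean document; each statement's English description precedes it below -/
import Mathlib

section
/- Fix ℓ ≥ 1 and m ≥ 1, and let f₀ : ℕ → ℚ be the sequence with f₀(1) = f₀(ℓ+1) = 1 and f₀(j) = 0 for all other j ≥ 1. Then for every n ≥ 0, the m-th invert transform of f₀ satisfies (𝒴^m f₀)(n+1) = Σ_{i ≥ 0, ℓi ≤ n} C(n + 1 − ℓi, i) · m^(n − ℓi). (This number counts the words of length n over the alphabet {0, 1, …, m} in which zeros occur only in maximal runs of length exactly ℓ.) -/
/-- The invert transform of a sequence `x : ℕ → ℚ` (indexed from 1, `x 0` ignored):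
`(𝒴x)(0) = 0` and `(𝒴x)(n) = x n + ∑_{j=1}^{n-1} x j * (𝒴x)(n-j)` for `n ≥ 1`. -/
def invert (x : ℕ → ℚ) : ℕ → ℚ
  | 0 => 0
  | n + 1 => x (n + 1) + ∑ j ∈ Finset.range n, x (j + 1) * invert x (n - j)
  termination_by n => n
  decreasing_by omega

/-- The partial Bell polynomial `B_{n,k}(z₁, z₂, …)`, evaluated at a sequence of rationals
`z` (indexed from 1, `z 0` ignored): the sum over all finitely supported `α : ℕ → ℕ` with
`α 0 = 0`, `∑ i, α i = k` and `∑ i, i * α i = n` of `(n! / ∏ i, (α i)!) * ∏ i (z i / i!)^(α i)`. -/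
def partialBell (n k : ℕ) (z : ℕ → ℚ) : ℚ :=
  ∑ α ∈ ((Finset.range (n + 1)).finsuppAntidiag k).filter
      (fun α => (∑ i ∈ Finset.range (n + 1), i * α i) = n ∧ α 0 = 0),
    ((n.factorial : ℚ) / ∏ i ∈ Finset.range (n + 1), ((α i).factorial : ℚ)) *
      ∏ i ∈ Finset.range (n + 1), (z i / (i.factorial : ℚ)) ^ α i


/-! In generating functions the invert transform is `F ↦ F / (1 - F)`, so by induction
`𝒴^m F = F / (1 - m F)`. When `F` has no constant term, the coefficient of `tⁿ` in
`F / (1 - m F)` is that of the truncated geometric series `∑_{k<n} mᵏ F^(k+1)`.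
For `F = t (1 + t^ℓ)` the binomial theorem then gives `∑ C(k+1, i) mᵏ` over `k + ℓ i = n`
as the coefficient of `t^(n+1)`. -/

open PowerSeries Finset


theorem invert_zero (x : ℕ → ℚ) : invert x 0 = 0 := by
  rw [invert]

theorem invert_congr {x y : ℕ → ℚ} (h : ∀ j, 1 ≤ j → x j = y j) : invert x = invert y := by
  funext n
  induction n using Nat.strong_induction_on with
  | _ n ih =>
    cases n with
    | zero => rw [invert_zero, invert_zero]
    | succ n =>
      rw [invert, invert, h (n + 1) (by omega)]
      congr 1
      refine sum_congr rfl fun j hj => ?_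
      rw [h (j + 1) (by omega), ih (n - j) (by omega)]

theorem iterate_invert_congr {x y : ℕ → ℚ} (h : ∀ j, 1 ≤ j → x j = y j) (m : ℕ) :
    ∀ j, 1 ≤ j → (invert^[m] x) j = (invert^[m] y) j := by
  cases m with
  | zero => exact h
  | succ m => simp only [Function.iterate_succ_apply, invert_congr h, implies_true]

theorem iterate_invert_zero {x : ℕ → ℚ} (hx : x 0 = 0) (m : ℕ) : (invert^[m] x) 0 = 0 := by
  cases m with
  | zero => exact hx
  | succ m => rw [Function.iterate_succ_apply', invert_zero]

theorem mk_invert {x : ℕ → ℚ} (hx : x 0 = 0) :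
    mk (invert x) = mk x + mk x * mk (invert x) := by
  ext n
  rw [map_add, coeff_mul, Nat.sum_antidiagonal_eq_sum_range_succ_mk]
  simp only [coeff_mk]
  cases n with
  | zero => simp [invert_zero, hx]
  | succ n =>
    rw [sum_range_succ, sum_range_succ', hx, Nat.sub_self, invert_zero, invert]
    simp only [zero_mul, mul_zero, add_zero, Nat.add_sub_add_right]

theorem one_sub_mul_mk_iterate_invert {x : ℕ → ℚ} (hx : x 0 = 0) (m : ℕ) :
    (1 - m * mk x) * mk (invert^[m] x) = mk x := by
  induction m with
  | zero => simp
  | succ m ih =>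
    have h := mk_invert (iterate_invert_zero hx m)
    rw [Function.iterate_succ_apply']
    push_cast
    linear_combination (1 - m * mk x) * h + (1 + mk (invert (invert^[m] x))) * ih


theorem coeff_eq_coeff_sum_pow_of_one_sub_mul_eq {R : Type*} [CommRing R] {c F G : R⟦X⟧}
    (hF : constantCoeff F = 0) (hG : (1 - c * F) * G = F) (n : ℕ) :
    coeff n G = coeff n (∑ k ∈ range n, c ^ k * F ^ (k + 1)) := by
  set S := ∑ k ∈ range n, c ^ k * F ^ (k + 1)
  have hS : S = F * ∑ k ∈ range n, (c * F) ^ k := by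
    rw [mul_sum]
    exact sum_congr rfl fun k _ => by ring
  have hdiff : (1 - c * F) * (G - S) = c ^ n * F ^ (n + 1) := by
    linear_combination hG - F * mul_neg_geom_sum (c * F) n - (1 - c * F) * hS
  have hunit : IsUnit (1 - c * F) := by
    simp [isUnit_iff_constantCoeff, hF]
  have hdvd : X ^ (n + 1) ∣ G - S := by
    rw [← hunit.dvd_mul_left, hdiff]
    exact (pow_dvd_pow_of_dvd (X_dvd_iff.mpr hF) _).mul_left _
  exact sub_eq_zero.mp (by simpa using X_pow_dvd_iff.mp hdvd n (by omega))

theorem coeff_one_add_X_pow_pow {R : Type*} [CommRing R] {ℓ : ℕ} (hℓ : ℓ ≠ 0) (N j : ℕ) :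
    coeff j ((1 + X ^ ℓ) ^ N : R⟦X⟧) = if ℓ ∣ j then (N.choose (j / ℓ) : R) else 0 := by
  have hexpand : ((1 + X ^ ℓ) ^ N : R⟦X⟧)
      = expand ℓ hℓ (((1 + Polynomial.X) ^ N : Polynomial R) : R⟦X⟧) := by
    simp
  rw [hexpand, coeff_expand, Polynomial.coeff_coe, Polynomial.coeff_one_add_X_pow]

theorem sum_range_ite_dvd_sub {M : Type*} [AddCommMonoid M] {ℓ : ℕ} (hℓ : ℓ ≠ 0) (n : ℕ)
    (f : ℕ → ℕ → M) :
    ∑ k ∈ range (n + 1), (if ℓ ∣ n - k then f k ((n - k) / ℓ) else 0)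
      = ∑ i ∈ range (n / ℓ + 1), f (n - ℓ * i) i := by
  have hmul : ∀ i, i < n / ℓ + 1 → ℓ * i ≤ n := fun i hi =>
    (Nat.mul_le_mul_left ℓ (Nat.lt_succ_iff.mp hi)).trans (Nat.mul_div_le n ℓ)
  rw [← sum_filter]
  refine sum_nbij' (fun k => (n - k) / ℓ) (fun i => n - ℓ * i) ?_ ?_ ?_ ?_ ?_
  · intro k hk
    simp only [mem_filter, mem_range] at hk ⊢
    exact Nat.lt_succ_of_le (Nat.div_le_div_right (by omega))
  · intro i hi
    simp only [mem_filter, mem_range] at hi ⊢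
    exact ⟨by omega, by rw [Nat.sub_sub_self (hmul i hi)]; exact dvd_mul_right ℓ i⟩
  · intro k hk
    simp only [mem_filter, mem_range] at hk
    rw [Nat.mul_div_cancel' hk.2]
    omega
  · intro i hi
    simp only [mem_range] at hi
    rw [Nat.sub_sub_self (hmul i hi), Nat.mul_div_cancel_left i (Nat.pos_of_ne_zero hℓ)]
  · intro k hk
    simp only [mem_filter, mem_range] at hk
    rw [Nat.mul_div_cancel' hk.2, Nat.sub_sub_self (by omega)]

theorem coeff_succ_sum_pow_X_mul_one_add_X_pow {R : Type*} [CommRing R] {ℓ : ℕ} (hℓ : ℓ ≠ 0)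
    (m n : ℕ) :
    coeff (n + 1) (∑ k ∈ range (n + 1), (m : R⟦X⟧) ^ k * (X * (1 + X ^ ℓ)) ^ (k + 1))
      = ∑ i ∈ range (n / ℓ + 1), ((n + 1 - ℓ * i).choose i : R) * (m : R) ^ (n - ℓ * i) := by
  have hterm : ∀ k ∈ range (n + 1),
      coeff (n + 1) ((m : R⟦X⟧) ^ k * (X * (1 + X ^ ℓ)) ^ (k + 1))
        = if ℓ ∣ n - k then (m : R) ^ k * ((k + 1).choose ((n - k) / ℓ) : R) else 0 := by
    intro k hk
    rw [mul_pow, mul_left_comm, ← map_natCast (C (R := R)), ← map_pow, coeff_X_pow_mul',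
      if_pos (by simp at hk; omega), coeff_C_mul, coeff_one_add_X_pow_pow hℓ,
      Nat.add_sub_add_right, mul_ite, mul_zero]
  rw [map_sum, sum_congr rfl hterm,
    sum_range_ite_dvd_sub hℓ n (fun k i => (m : R) ^ k * ((k + 1).choose i : R))]
  refine sum_congr rfl fun i hi => ?_
  have hi : ℓ * i ≤ n :=
    (Nat.mul_le_mul_left ℓ (Nat.lt_succ_iff.mp (mem_range.mp hi))).trans (Nat.mul_div_le n ℓ)
  rw [mul_comm, Nat.sub_add_comm hi]

theorem stmt_10_general (ℓ m : ℕ) (hℓ : 1 ≤ ℓ) (f₀ : ℕ → ℚ)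
    (hf : ∀ j, 1 ≤ j → f₀ j = if j = 1 ∨ j = ℓ + 1 then 1 else 0) (n : ℕ) :
    (invert^[m] f₀) (n + 1)
      = ∑ i ∈ Finset.range (n / ℓ + 1),
          ((n + 1 - ℓ * i).choose i : ℚ) * (m : ℚ) ^ (n - ℓ * i) := by
  set f : ℕ → ℚ := fun j => if j = 1 ∨ j = ℓ + 1 then 1 else 0
  have hf0 : f 0 = 0 := if_neg (by omega)
  have hF : mk f = X * (1 + X ^ ℓ) := by
    ext j
    simp only [coeff_mk, mul_add, mul_one, ← pow_succ', map_add, coeff_X, coeff_X_pow, f]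
    split_ifs <;> first | omega | norm_num
  rw [iterate_invert_congr hf m (n + 1) (by omega), ← coeff_mk (n + 1) (invert^[m] f),
    coeff_eq_coeff_sum_pow_of_one_sub_mul_eq (by simp)
      (hF ▸ one_sub_mul_mk_iterate_invert hf0 m),
    coeff_succ_sum_pow_X_mul_one_add_X_pow (by omega)]

/-- For `f₀ 1 = f₀ (ℓ+1) = 1` and `f₀ j = 0` otherwise, and `m ≥ 1`:
`(𝒴^m f₀)(n+1) = ∑_{ℓi ≤ n} C(n+1-ℓi, i) m^(n-ℓi)`,
which counts words of length `n` over `{0,…,m}` whose zeros occur only in runs of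
length exactly `ℓ`. -/
theorem stmt_10 (ℓ m : ℕ) (hℓ : 1 ≤ ℓ) (hm : 1 ≤ m) (f₀ : ℕ → ℚ)
    (hf : ∀ j, 1 ≤ j → f₀ j = if j = 1 ∨ j = ℓ + 1 then 1 else 0) (n : ℕ) :
    (invert^[m] f₀) (n + 1)
      = ∑ i ∈ Finset.range (n / ℓ + 1),
          ((n + 1 - ℓ * i).choose i : ℚ) * (m : ℚ) ^ (n - ℓ * i) :=
  stmt_10_general ℓ m hℓ f₀ hf n
end

section
/- Fix ℓ ≥ 1 and integers n ≥ k ≥ 1. Let z be the sequence with z_j = j! for all j ≥ 1 except z_{ℓ+1} = 0. Then B_{n,k}(z₁, z₂, …) = (n!/k!) · ( Σ_{κ=0}^{k−1, (ℓ+1)κ ≤ n−1} (−1)^κ · C(k, κ) · C(n − (ℓ+1)κ − 1, k − κ − 1) + (−1)^k · δ_{n, (ℓ+1)k} ), where δ_{n,(ℓ+1)k} is the Kronecker delta. -/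
/-!
`B_{n,k}(z) = n!/k! · [xⁿ] (∑_{j ≥ 1} z_j xʲ/j!)ᵏ`. For the given `z` the inner series
is `x/(1-x) - x^(ℓ+1)`; expanding its `k`-th power binomially and using
`[xᵐ] (x/(1-x))ʳ = C(m-1, r-1)` gives the formula, the term `κ = k` being `(-x^(ℓ+1))ᵏ`.
-/

open Finset PowerSeries Nat

theorem Finset.sum_finsuppAntidiag_eq_sum_piAntidiag {ι μ M : Type*} [DecidableEq ι]
    [AddCommMonoid μ] [HasAntidiagonal μ] [DecidableEq μ] [AddCommMonoid M]
    (s : Finset ι) (n : μ) (g : (ι → μ) → M) :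
    ∑ f ∈ s.finsuppAntidiag n, g f = ∑ f ∈ s.piAntidiag n, g f := by
  rw [finsuppAntidiag, sum_map]
  exact sum_attach (s.piAntidiag n) g

theorem div_prod_factorial_eq_mul_multinomial {ι K : Type*} [Field K] [CharZero K] (s : Finset ι)
    (β : ι → ℕ) (m : ℕ) :
    (m ! : K) / ∏ i ∈ s, ((β i) ! : K) = m ! / (∑ i ∈ s, β i) ! * multinomial s β := by
  have hspec : (∏ i ∈ s, ((β i) ! : K)) * multinomial s β = (∑ i ∈ s, β i) ! := by
    exact_mod_cast multinomial_spec s β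
  have hmult : (multinomial s β : K) ≠ 0 := by exact_mod_cast (multinomial_pos s β).ne'
  rw [← hspec, div_mul_eq_mul_div, mul_div_mul_right _ _ hmult]

namespace PowerSeries

variable {R : Type*}

theorem coeff_pow_congr [CommSemiring R] {f g : R⟦X⟧} {n : ℕ}
    (h : ∀ i ≤ n, coeff i f = coeff i g) (k : ℕ) :
    coeff n (f ^ k) = coeff n (g ^ k) := by
  have htrunc : trunc (n + 1) f = trunc (n + 1) g := by
    ext m
    simp only [coeff_trunc]
    split_ifs with hm
    exacts [h m (by omega), rfl]
  have hpow := congrArg (fun p => Polynomial.coeff p n) <|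
    (trunc_trunc_pow f (n + 1) k).symm.trans (htrunc ▸ trunc_trunc_pow g (n + 1) k)
  simpa [coeff_trunc] using hpow

theorem coeff_pow_eq_sum_finsuppAntidiag [CommSemiring R] (f : R⟦X⟧) (n k : ℕ) :
    coeff n (f ^ k) = ∑ β ∈ finsuppAntidiag (range (n + 1)) k,
      if ∑ i ∈ range (n + 1), i * β i = n then
        multinomial (range (n + 1)) β * ∏ i ∈ range (n + 1), coeff i f ^ β i
      else 0 := by
  have htrunc : coeff n (f ^ k) = coeff n ((∑ i ∈ range (n + 1), C (coeff i f) * X ^ i) ^ k) := by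
    refine coeff_pow_congr (fun i hi => ?_) k
    simp [coeff_X_pow, mem_range, show i < n + 1 by omega]
  rw [htrunc, sum_pow_eq_sum_piAntidiag, map_sum, ← sum_finsuppAntidiag_eq_sum_piAntidiag]
  refine sum_congr rfl fun β _ => ?_
  have hprod : ∏ i ∈ range (n + 1), (C (coeff i f) * X ^ i) ^ β i
      = C (∏ i ∈ range (n + 1), coeff i f ^ β i) * X ^ (∑ i ∈ range (n + 1), i * β i) := by
    simp only [mul_pow, prod_mul_distrib, map_prod, map_pow, ← pow_mul, prod_pow_eq_pow_sum]
  rw [hprod, ← map_natCast C, ← mul_assoc, ← map_mul, coeff_C_mul_X_pow]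
  exact if_congr eq_comm rfl rfl

theorem coeff_X_mul_mk_one_pow [CommRing R] {r : ℕ} (hr : r ≠ 0) (m : ℕ) :
    coeff m ((X * mk 1 : R⟦X⟧) ^ r) = if 1 ≤ m then ((m - 1).choose (r - 1) : R) else 0 := by
  obtain ⟨d, rfl⟩ := exists_eq_add_one_of_ne_zero hr
  rw [mul_pow, mk_one_pow_eq_mk_choose_add, coeff_X_pow_mul', coeff_mk, add_tsub_cancel_right]
  split_ifs with hd hm hm
  · congr 2
    omega
  · omega
  · rw [choose_eq_zero_of_lt (by omega), cast_zero]
  · rfl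

theorem coeff_X_mul_mk_one_sub_X_pow_pow [CommRing R] (j : ℕ) {n : ℕ} (hn : n ≠ 0) (k : ℕ) :
    coeff n ((X * mk 1 - X ^ j : R⟦X⟧) ^ k)
      = (∑ κ ∈ (range k).filter (fun κ => j * κ ≤ n - 1),
            (-1 : R) ^ κ * (k.choose κ : R) * ((n - j * κ - 1).choose (k - κ - 1) : R))
        + if n = j * k then (-1 : R) ^ k else 0 := by
  have hterm : ∀ κ, coeff n ((-X ^ j) ^ κ * (X * mk 1) ^ (k - κ) * (k.choose κ : R⟦X⟧))
      = (-1) ^ κ * k.choose κ *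
          if j * κ ≤ n then coeff (n - j * κ) ((X * mk 1 : R⟦X⟧) ^ (k - κ)) else 0 := by
    intro κ
    have hsplit : (-X ^ j) ^ κ * (X * mk 1) ^ (k - κ) * (k.choose κ : R⟦X⟧)
        = C ((-1 : R) ^ κ * k.choose κ) * (X ^ (j * κ) * (X * mk 1) ^ (k - κ)) := by
      rw [pow_mul, map_mul, map_pow, map_neg, map_one, map_natCast]
      ring
    rw [hsplit, coeff_C_mul, coeff_X_pow_mul']
  rw [sub_eq_neg_add, add_pow, map_sum, sum_range_succ, sum_filter]
  simp only [hterm]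
  congr 1
  · refine sum_congr rfl fun κ hκ => ?_
    rw [coeff_X_mul_mk_one_pow (by simp at hκ; omega)]
    split_ifs <;> first | rfl | (exfalso; omega) | simp
  · rw [Nat.sub_self, pow_zero, choose_self, cast_one, mul_one, coeff_one]
    split_ifs <;> first | rfl | (exfalso; omega) | simp

end PowerSeries

theorem partialBell_eq_coeff_pow (n k : ℕ) (z : ℕ → ℚ) :
    partialBell n k z
      = n ! / k ! * coeff n ((PowerSeries.mk fun i => if i = 0 then 0 else z i / i !) ^ k) := by
  rw [coeff_pow_eq_sum_finsuppAntidiag, partialBell, sum_filter, mul_sum]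
  refine sum_congr rfl fun β hβ => ?_
  obtain ⟨hsum, -⟩ := mem_finsuppAntidiag.1 hβ
  simp only [coeff_mk]
  rw [div_prod_factorial_eq_mul_multinomial, hsum]
  by_cases h0 : β 0 = 0
  · have hprod : ∏ i ∈ range (n + 1), (z i / i !) ^ β i
        = ∏ i ∈ range (n + 1), (if i = 0 then 0 else z i / i !) ^ β i :=
      prod_congr rfl fun i _ => by rcases eq_or_ne i 0 with rfl | hi <;> simp [*]
    simp only [h0, and_true, hprod, mul_ite, mul_zero, mul_assoc]
  · have hprod : ∏ i ∈ range (n + 1), (if i = 0 then 0 else z i / i !) ^ β i = 0 :=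
      prod_eq_zero (mem_range.2 n.succ_pos) (by simp [h0])
    simp only [h0, and_false, if_false, hprod, mul_zero, ite_self]

theorem stmt_18_general (ℓ : ℕ) (n k : ℕ) (hk : 1 ≤ k) (hkn : k ≤ n)
    (z : ℕ → ℚ) (hz : ∀ j, 1 ≤ j → z j = if j = ℓ + 1 then 0 else (j.factorial : ℚ)) :
    partialBell n k z
      = ((n.factorial : ℚ) / (k.factorial : ℚ)) *
          ((∑ κ ∈ (Finset.range k).filter (fun κ => (ℓ + 1) * κ ≤ n - 1),
              (-1 : ℚ) ^ κ * (k.choose κ : ℚ) *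
                ((n - (ℓ + 1) * κ - 1).choose (k - κ - 1) : ℚ))
            + (if n = (ℓ + 1) * k then (-1 : ℚ) ^ k else 0)) := by
  have hegf : (PowerSeries.mk fun i => if i = 0 then 0 else z i / i ! : ℚ⟦X⟧)
      = X * PowerSeries.mk 1 - X ^ (ℓ + 1) := by
    ext i
    rcases eq_or_ne i 0 with rfl | hi
    · simp
    · rw [coeff_mk, if_neg hi, hz i (one_le_iff_ne_zero.2 hi), map_sub, coeff_X_pow]
      obtain ⟨m, rfl⟩ := exists_eq_add_one_of_ne_zero hi
      split_ifs <;> simp [coeff_succ_X_mul, factorial_ne_zero, *]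
  rw [partialBell_eq_coeff_pow, hegf, coeff_X_mul_mk_one_sub_X_pow_pow _ (by omega)]

/-- Bell identity 3: for `ℓ ≥ 1` and `n ≥ k ≥ 1`,
`B_{n,k}(1!, …, ℓ!, 0, (ℓ+2)!, (ℓ+3)!, …) = (n!/k!) (∑_{κ<k, (ℓ+1)κ≤n-1}
(-1)^κ C(k,κ) C(n-(ℓ+1)κ-1, k-κ-1) + (-1)^k δ_{n,(ℓ+1)k})`. -/
theorem stmt_18 (ℓ : ℕ) (hℓ : 1 ≤ ℓ) (n k : ℕ) (hk : 1 ≤ k) (hkn : k ≤ n)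
    (z : ℕ → ℚ) (hz : ∀ j, 1 ≤ j → z j = if j = ℓ + 1 then 0 else (j.factorial : ℚ)) :
    partialBell n k z
      = ((n.factorial : ℚ) / (k.factorial : ℚ)) *
          ((∑ κ ∈ (Finset.range k).filter (fun κ => (ℓ + 1) * κ ≤ n - 1),
              (-1 : ℚ) ^ κ * (k.choose κ : ℚ) *
                ((n - (ℓ + 1) * κ - 1).choose (k - κ - 1) : ℚ))
            + (if n = (ℓ + 1) * k then (-1 : ℚ) ^ k else 0)) :=
  stmt_18_general ℓ n k hk hkn z hz
end
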